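/- arXiv:2001.03810 — 2 statements merged into one kernel-verified Lean document; each statement's English description precedes it below -/
import Mathlib

section
/- Let m ≥ 4 be even and s = 3. The collection of transmissions x_k = w_{1+2k} + w_{2+2k} for k = 0, 1, ..., m/2 − 1 (indices modulo m, messages w_i elements of a vector space over GF(2)) has the property that for every user u_j with side information A_j = {j, j+1, j+2 mod m}, there exists a transmission x_k involving exactly one message outside A_j; hence each user can decode exactly one new message from a single transmission. -/
lemma pair_sdiff_card_left {α : Type*} [DecidableEq α] (S : Finset α) (a b : α)
    (ha : a ∈ S) (hb : b ∉ S) : (({b, a} : Finset α) \ S).card = 1 := by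
  have h : ({b, a} : Finset α) \ S = {b} := by
    ext x
    simp only [Finset.mem_sdiff, Finset.mem_insert, Finset.mem_singleton]
    constructor
    · rintro ⟨h | h, hx⟩
      · exact h
      · exact absurd (h ▸ ha) hx
    · rintro rfl; exact ⟨Or.inl rfl, hb⟩
  rw [h, Finset.card_singleton]

lemma pair_sdiff_card_right {α : Type*} [DecidableEq α] (S : Finset α) (a b : α)
    (ha : a ∈ S) (hb : b ∉ S) : (({a, b} : Finset α) \ S).card = 1 := by
  rw [Finset.pair_comm]
  exact pair_sdiff_card_left S a b ha hb

lemma exists_two_mul (n : ℕ) (hn : 0 < n) (v : ℕ) (hv : Even v) :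
    ∃ k < n, ((2 * k : ℕ) : ZMod (2 * n)) = (v : ZMod (2 * n)) := by
  refine ⟨v % (2 * n) / 2, ?_, ?_⟩
  · have := Nat.mod_lt v (show 0 < 2 * n by omega); omega
  · have hmod : v % (2 * n) % 2 = 0 := by
      rw [Nat.mod_mod_of_dvd v ⟨n, rfl⟩]
      obtain ⟨r, hr⟩ := hv; omega
    have h2 : 2 * (v % (2 * n) / 2) = v % (2 * n) := by omega
    rw [h2, ZMod.natCast_mod]

/-- For even `m ≥ 4` and `s = 3`: for every user `j`, some transmission
`w_{1+2k} + w_{2+2k}` (`k < m/2`) involves exactly one message outside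
the side information `{j, j+1, j+2}`. -/
theorem stmt5 (m : ℕ) (hm : 4 ≤ m) (hme : 2 ∣ m) :
    ∀ j : ZMod m, ∃ k < m / 2,
      ((({((1 + 2 * k : ℕ) : ZMod m), ((2 + 2 * k : ℕ) : ZMod m)} : Finset (ZMod m)) \
        ({j, j + 1, j + 2} : Finset (ZMod m))).card = 1) := by
  obtain ⟨n, rfl⟩ := hme
  have hn : 2 ≤ n := by omega
  haveI : NeZero (2 * n) := ⟨by omega⟩
  intro j
  have hval : j.val < 2 * n := j.val_lt
  have hjv : ((j.val : ℕ) : ZMod (2 * n)) = j := ZMod.natCast_rightInverse j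
  have hself : ((2 * n : ℕ) : ZMod (2 * n)) = 0 := ZMod.natCast_self _
  have hcz : ∀ a : ℕ, 0 < a → a < 2 * n → ((a : ℕ) : ZMod (2 * n)) ≠ 0 := by
    intro a ha ham h
    have := (ZMod.natCast_eq_zero_iff a (2 * n)).mp h
    have := Nat.le_of_dvd ha this
    omega
  have h1z : (1 : ZMod (2 * n)) ≠ 0 := by
    have := hcz 1 (by omega) (by omega); simpa using this
  have h2z : (2 : ZMod (2 * n)) ≠ 0 := by
    have := hcz 2 (by omega) (by omega); simpa using this
  have h3z : (3 : ZMod (2 * n)) ≠ 0 := by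
    have := hcz 3 (by omega) (by omega); simpa using this
  have hmdiv : (2 * n) / 2 = n := by omega
  rcases Nat.even_or_odd j.val with he | ho
  · -- j.val even: pair {j-1, j}
    obtain ⟨k, hk, hcast⟩ := exists_two_mul n (by omega) (j.val + 2 * n - 2)
      (by obtain ⟨t, ht⟩ := he; exact ⟨t + n - 1, by omega⟩)
    refine ⟨k, by omega, ?_⟩
    have hc2 : ((2 * k : ℕ) : ZMod (2 * n)) = j - 2 := by
      rw [hcast]
      have : ((j.val + 2 * n - 2 : ℕ) : ZMod (2 * n))
          = ((j.val + 2 * n : ℕ) : ZMod (2 * n)) - ((2 : ℕ) : ZMod (2 * n)) := by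
        rw [← Nat.cast_sub (by omega)]
      rw [this, Nat.cast_add, hjv, hself]
      push_cast
      ring
    have e1 : ((1 + 2 * k : ℕ) : ZMod (2 * n)) = j - 1 := by
      push_cast
      have : ((2 * k : ℕ) : ZMod (2 * n)) = (2 : ZMod (2 * n)) * k := by push_cast; ring
      rw [← this, hc2]; ring
    have e2 : ((2 + 2 * k : ℕ) : ZMod (2 * n)) = j := by
      push_cast
      have : ((2 * k : ℕ) : ZMod (2 * n)) = (2 : ZMod (2 * n)) * k := by push_cast; ring
      rw [← this, hc2]; ring
    rw [e1, e2]
    apply pair_sdiff_card_left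
    · simp
    · simp only [Finset.mem_insert, Finset.mem_singleton]
      push_neg
      refine ⟨?_, ?_, ?_⟩
      · intro h; exact h1z (by linear_combination -h)
      · intro h; exact h2z (by linear_combination -h)
      · intro h; exact h3z (by linear_combination -h)
  · -- j.val odd: pair {j+2, j+3}
    obtain ⟨k, hk, hcast⟩ := exists_two_mul n (by omega) (j.val + 1)
      (by obtain ⟨t, ht⟩ := ho; exact ⟨t + 1, by omega⟩)
    refine ⟨k, by omega, ?_⟩
    have hc2 : ((2 * k : ℕ) : ZMod (2 * n)) = j + 1 := by
      rw [hcast]; push_cast; rw [hjv]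
    have e1 : ((1 + 2 * k : ℕ) : ZMod (2 * n)) = j + 2 := by
      push_cast
      have : ((2 * k : ℕ) : ZMod (2 * n)) = (2 : ZMod (2 * n)) * k := by push_cast; ring
      rw [← this, hc2]; ring
    have e2 : ((2 + 2 * k : ℕ) : ZMod (2 * n)) = j + 3 := by
      push_cast
      have : ((2 * k : ℕ) : ZMod (2 * n)) = (2 : ZMod (2 * n)) * k := by push_cast; ring
      rw [← this, hc2]; ring
    rw [e1, e2]
    apply pair_sdiff_card_right
    · simp
    · simp only [Finset.mem_insert, Finset.mem_singleton]
      push_neg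
      refine ⟨?_, ?_, ?_⟩
      · intro h; exact h3z (by linear_combination h)
      · intro h; exact h2z (by linear_combination h)
      · intro h; exact h1z (by linear_combination h)
end

section
/- Let m ≥ 3 and s = 1, so each user u_j knows exactly one message w_j. Suppose a decentralized scheme satisfies all users: then there exist a first transmitting user (say u_1) whose transmission is a function of w_1 alone. Any deterministic decoding scheme in which all m−1 other users can recover w_1 from the transmissions allows every user u_j with j ≠ 1 to also compute w_{d_1}, the message decoded by u_1. Since m ≥ 3, at least one user u_j with j ∉ {1, d_1} decodes two messages outside its side information set, violating individual security. Formally: if m ≥ 3, there is no family of encoding functions ENC_j : W_{A_j} → codewords and decoding functions making every user decode exactly one new message while I(W_i ; transmissions, W_{A_j}) = 0 for all non-desired i. -/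
/-- Infeasibility of the decentralized secure PICOD with `s = 1` and `m ≥ 3`:
there is no family of local encoders, desired-message assignment and decoders such that
every user correctly decodes one new message while remaining individually secure
(given its side information and all codewords, any non-desired message could take any value). -/
theorem stmt7 (m : ℕ) (hm : 3 ≤ m) (M : Type*) [Nontrivial M] (C : Fin m → Type*) :
    ¬ ∃ (ENC : ∀ j : Fin m, M → C j) (d : Fin m → Fin m)
        (DEC : ∀ _ : Fin m, (∀ k : Fin m, C k) → M → M),
      (∀ j, d j ≠ j) ∧
      (∀ (W : Fin m → M) (j : Fin m), DEC j (fun k => ENC k (W k)) (W j) = W (d j)) ∧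
      (∀ (j i : Fin m), i ≠ j → i ≠ d j → ∀ (W : Fin m → M) (w : M),
        ∃ W' : Fin m → M, W' i = w ∧ W' j = W j ∧
          ∀ k, ENC k (W' k) = ENC k (W k)) := by
  rintro ⟨ENC, d, DEC, hd, hcorr, hsec⟩
  have hm0 : 0 < m := by omega
  -- Every message that is desired by someone must be encoded injectively.
  have hinj : ∀ t : Fin m, Function.Injective (ENC (d t)) := by
    intro t w1 w2 h
    set W' : Fin m → M := Function.update (fun _ => w1) (d t) w2 with hW'
    have h1 := hcorr (fun _ => w1) t
    have h2 := hcorr W' t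
    have hcodes : (fun k => ENC k (W' k)) = (fun k => ENC k w1) := by
      funext k
      rcases eq_or_ne k (d t) with rfl | hk
      · simp [hW', ← h]
      · simp [hW', Function.update_of_ne hk]
    have hWt : W' t = w1 := by
      simp [hW', Function.update_of_ne (hd t).symm]
    rw [hcodes, hWt] at h2
    rw [h1] at h2
    simpa [hW'] using h2
  -- The desired-message map is not constant.
  obtain ⟨a, b, hab⟩ : ∃ a b : Fin m, d a ≠ d b := by
    by_contra h
    push_neg at h
    exact hd (d ⟨0, hm0⟩) (h _ _)
  -- There is a user `t` different from both `d a` and `d b`.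
  obtain ⟨t, hta, htb⟩ : ∃ t : Fin m, t ≠ d a ∧ t ≠ d b := by
    have hne : (({d a, d b} : Finset (Fin m))ᶜ).Nonempty := by
      rw [← Finset.card_pos, Finset.card_compl]
      have h1 : ({d a, d b} : Finset (Fin m)).card ≤ 2 := by
        apply le_trans (Finset.card_insert_le _ _)
        simp
      have h2 : Fintype.card (Fin m) = m := by simp
      omega
    obtain ⟨u, hu⟩ := hne
    rw [Finset.mem_compl, Finset.mem_insert, Finset.mem_singleton] at hu
    push_neg at hu
    exact ⟨u, hu.1, hu.2⟩
  -- Main contradiction: user `t` is supposed to be ignorant of message `d s`,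
  -- yet `ENC (d s)` is injective, so the codewords pin down that message.
  have key : ∀ s : Fin m, d s ≠ t → d s ≠ d t → False := by
    intro s hst hsdt
    obtain ⟨x, y, hxy⟩ := exists_pair_ne M
    obtain ⟨W', hWi, _, hcode⟩ := hsec t (d s) hst hsdt (fun _ => x) y
    have := hinj s (hcode (d s))
    rw [hWi] at this
    exact hxy this.symm
  rcases eq_or_ne (d a) (d t) with hadt | hadt
  · exact key b htb.symm (fun h => hab (hadt.trans h.symm))
  · exact key a hta.symm hadt
end
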